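/- arXiv:1302.2402 — 2 statements merged into one kernel-verified Lean document; each statement's English description precedes it below -/
import Mathlib

section
/- Let F be a field extension of a field k and let L, M, N be nonzero finite-dimensional k-subspaces of F. If L*N = M*N as subspaces (where the product is the span of pairwise products), then L and M have the same integral closure; in particular every element of L is integral over M in the sense that it satisfies a monic equation f^n + g_{n-1} f^{n-1} + ... + g_0 = 0 with g_i ∈ M^{n-i}. -/
open Polynomial Matrix

/-- `f ∈ F` is integral over the `k`-subspace `L ⊆ F` if it satisfies a monic
equation `f^n + g_{n-1} f^{n-1} + ⋯ + g_0 = 0` with `g_i ∈ L^{n-i}`. -/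
def IsIntegralOverSubspace {k F : Type*} [Field k] [Field F] [Algebra k F]
    (L : Submodule k F) (f : F) : Prop :=
  ∃ n : ℕ, 0 < n ∧ ∃ g : ℕ → F, (∀ i < n, g i ∈ L ^ (n - i)) ∧
    f ^ n + ∑ i ∈ Finset.range n, g i * f ^ i = 0


set_option maxHeartbeats 1000000

namespace Stmt4Aux

variable {k F : Type*} [Field k] [Field F] [Algebra k F]

/-- A polynomial is `Good W n` if its `i`-th coefficient lies in `W ^ (n - i)`
for `i ≤ n` and vanishes for `i > n`. -/
def Good (W : Submodule k F) (n : ℕ) (p : F[X]) : Prop :=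
  ∀ i, (i ≤ n → p.coeff i ∈ W ^ (n - i)) ∧ (n < i → p.coeff i = 0)

lemma good_mul {W : Submodule k F} {a b : ℕ} {p q : F[X]}
    (hp : Good W a p) (hq : Good W b q) : Good W (a + b) (p * q) := by
  intro i
  constructor
  · intro hi
    rw [coeff_mul]
    apply Submodule.sum_mem
    rintro ⟨x, y⟩ hxy
    rw [Finset.HasAntidiagonal.mem_antidiagonal] at hxy
    by_cases hx : x ≤ a
    · by_cases hy : y ≤ b
      · have e : a + b - i = (a - x) + (b - y) := by omega
        rw [e, pow_add]
        exact Submodule.mul_mem_mul ((hp x).1 hx) ((hq y).1 hy)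
      · rw [(hq y).2 (by omega), mul_zero]; exact Submodule.zero_mem _
    · rw [(hp x).2 (by omega), zero_mul]; exact Submodule.zero_mem _
  · intro hi
    rw [coeff_mul]
    apply Finset.sum_eq_zero
    rintro ⟨x, y⟩ hxy
    rw [Finset.HasAntidiagonal.mem_antidiagonal] at hxy
    by_cases hx : x ≤ a
    · rw [(hq y).2 (by omega), mul_zero]
    · rw [(hp x).2 (by omega), zero_mul]

lemma good_one (W : Submodule k F) : Good W 0 (1 : F[X]) := by
  intro i
  constructor
  · intro hi
    interval_cases i
    simpa using Submodule.one_le.1 le_rfl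
  · intro hi
    simp [coeff_one, hi.ne']

lemma good_prod {W : Submodule k F} {ι : Type*} (s : Finset ι) (g : ι → F[X])
    (hg : ∀ x ∈ s, Good W 1 (g x)) : Good W s.card (∏ x ∈ s, g x) := by
  induction s using Finset.cons_induction with
  | empty => simpa using good_one W
  | cons x s hx ih =>
    rw [Finset.prod_cons, Finset.card_cons, add_comm s.card 1]
    exact good_mul (hg x (Finset.mem_cons_self x s)) (ih fun y hy => hg y (Finset.mem_cons_of_mem hy))

lemma good_sum {W : Submodule k F} {n : ℕ} {ι : Type*} (s : Finset ι) (t : ι → F[X])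
    (ht : ∀ x ∈ s, Good W n (t x)) : Good W n (∑ x ∈ s, t x) := by
  intro i
  constructor
  · intro hi
    rw [finset_sum_coeff]
    exact Submodule.sum_mem _ fun x hxs => ((ht x hxs) i).1 hi
  · intro hi
    rw [finset_sum_coeff]
    exact Finset.sum_eq_zero fun x hxs => ((ht x hxs) i).2 hi

lemma good_intCast_mul {W : Submodule k F} {n : ℕ} {p : F[X]} (z : ℤ)
    (hp : Good W n p) : Good W n ((z : F[X]) * p) := by
  intro i
  have hz : ((z : F[X]) * p).coeff i = z • p.coeff i := by
    push_cast
    rw [← C_eq_intCast, coeff_C_mul, zsmul_eq_mul]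
  constructor
  · intro hi
    rw [hz]
    exact zsmul_mem ((hp i).1 hi) z
  · intro hi
    rw [hz, (hp i).2 hi, smul_zero]

lemma good_charmatrix_entry {n : ℕ} {W : Submodule k F} {A : Matrix (Fin n) (Fin n) F}
    (hA : ∀ i j, A i j ∈ W) (i j : Fin n) : Good W 1 (charmatrix A i j) := by
  have h1 : (1 : F) ∈ (W ^ 0 : Submodule k F) := by
    rw [pow_zero]; exact Submodule.one_le.1 le_rfl
  intro m
  rcases eq_or_ne i j with rfl | hij
  · rw [charmatrix_apply_eq]
    refine ⟨fun hm => ?_, fun hm => ?_⟩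
    · interval_cases m
      · simpa [coeff_sub, pow_one] using hA i i
      · simpa [coeff_sub] using h1
    · rw [coeff_sub, coeff_X, coeff_C]
      simp [show ¬(1 = m) by omega, show ¬(m = 0) by omega]
  · rw [charmatrix_apply_ne _ _ _ hij]
    refine ⟨fun hm => ?_, fun hm => ?_⟩
    · interval_cases m
      · simpa [pow_one] using hA i j
      · simpa using Submodule.zero_mem (W ^ 0 : Submodule k F)
    · have : m ≠ 0 := by omega
      simp [coeff_C, this]

/-- The determinant trick: if `f • V ⊆ M * V` for a nonzero finite-dimensional
subspace `V`, then `f` is integral over `M`. -/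
lemma integral_of_smul_le (M V : Submodule k F) (hV : V ≠ ⊥) (hfin : FiniteDimensional k V)
    (f : F) (hf : ∀ v ∈ V, f * v ∈ M * V) : IsIntegralOverSubspace M f := by
  classical
  set n := Module.finrank k V with hn
  have hnpos : 0 < n := by
    have : Nontrivial V := Submodule.nontrivial_iff_ne_bot.2 hV
    exact Module.finrank_pos
  let b : Module.Basis (Fin n) k V := Module.finBasis k V
  have key : ∀ x ∈ M * V, ∃ c : Fin n → F, (∀ i, c i ∈ M) ∧ x = ∑ i, c i * (b i : F) := by
    intro x hx
    refine Submodule.mul_induction_on hx ?_ ?_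
    · intro m hm v hv
      refine ⟨fun i => b.repr ⟨v, hv⟩ i • m, fun i => M.smul_mem _ hm, ?_⟩
      have hv' : ((∑ i, b.repr ⟨v, hv⟩ i • b i : V) : F) = v := by rw [b.sum_repr ⟨v, hv⟩]
      have hv2 : v = ∑ i, b.repr ⟨v, hv⟩ i • (b i : F) := by
        conv_lhs => rw [← hv']
        push_cast
        rfl
      conv_lhs => rw [hv2]
      rw [Finset.mul_sum]
      exact Finset.sum_congr rfl fun i _ => by
        rw [mul_smul_comm, smul_mul_assoc]
    · rintro x y ⟨c1, hc1, rfl⟩ ⟨c2, hc2, rfl⟩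
      exact ⟨fun i => c1 i + c2 i, fun i => M.add_mem (hc1 i) (hc2 i), by
        rw [← Finset.sum_add_distrib]
        exact Finset.sum_congr rfl fun i _ => (add_mul _ _ _).symm⟩
  choose a ha haeq using fun j => key (f * (b j : F)) (hf _ (b j).2)
  let A : Matrix (Fin n) (Fin n) F := Matrix.of fun j i => a j i
  let v : Fin n → F := fun i => (b i : F)
  have hv0 : v ≠ 0 := by
    intro h0
    apply b.ne_zero ⟨0, hnpos⟩
    have := congrFun h0 ⟨0, hnpos⟩
    exact Subtype.ext this
  have hker : (Matrix.scalar (Fin n) f - A) *ᵥ v = 0 := by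
    funext j
    have hA : (A *ᵥ v) j = f * v j := by
      simpa [Matrix.mulVec, dotProduct, A, v] using (haeq j).symm
    have hs : ((Matrix.scalar (Fin n) f) *ᵥ v) j = f * v j := by
      simp [Matrix.scalar, Matrix.mulVec, dotProduct, Matrix.diagonal,
        Finset.sum_ite_eq]
    simp [Matrix.sub_mulVec, hs, hA]
  have hdet : (Matrix.scalar (Fin n) f - A).det = 0 :=
    Matrix.exists_mulVec_eq_zero_iff.1 ⟨v, hv0, hker⟩
  have hdeg : A.charpoly.natDegree = n := by
    simpa using A.charpoly_natDegree_eq_dim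
  have hmap : (charmatrix A).map (eval f) = Matrix.scalar (Fin n) f - A := by
    ext i j
    rcases eq_or_ne i j with rfl | hij
    · simp [charmatrix_apply_eq, Matrix.scalar, Matrix.diagonal]
    · simp [charmatrix_apply_ne _ _ _ hij, Matrix.scalar, Matrix.diagonal, hij]
  have heval : A.charpoly.eval f = 0 := by
    calc A.charpoly.eval f = (evalRingHom f) (charmatrix A).det := rfl
      _ = ((charmatrix A).map (evalRingHom f)).det := RingHom.map_det _ _
      _ = ((charmatrix A).map (eval f)).det := by rw [coe_evalRingHom]
      _ = (Matrix.scalar (Fin n) f - A).det := by rw [hmap]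
      _ = 0 := hdet
  have hGood : Good M n A.charpoly := by
    unfold Matrix.charpoly
    rw [Matrix.det_apply']
    apply good_sum
    intro σ _
    apply good_intCast_mul
    have := good_prod (Finset.univ : Finset (Fin n)) (fun i => charmatrix A (σ i) i)
      (fun i _ => good_charmatrix_entry (fun i j => ha i j) (σ i) i)
    simpa [Finset.card_univ] using this
  refine ⟨n, hnpos, fun i => A.charpoly.coeff i, fun i hi => (hGood i).1 hi.le, ?_⟩
  have h1 : A.charpoly.eval f = ∑ i ∈ Finset.range (n + 1), A.charpoly.coeff i * f ^ i := by
    rw [eval_eq_sum_range, hdeg]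
  rw [Finset.sum_range_succ] at h1
  have hcn : A.charpoly.coeff n = 1 := by
    have := (A.charpoly_monic).coeff_natDegree
    rwa [hdeg] at this
  rw [hcn, one_mul, heval] at h1
  rw [add_comm]
  exact h1.symm

lemma sum_le_iff {ι : Type*} (s : Finset ι) (t : ι → Submodule k F) (P : Submodule k F) :
    (∑ i ∈ s, t i) ≤ P ↔ ∀ i ∈ s, t i ≤ P := by
  induction s using Finset.cons_induction with
  | empty => simp
  | cons x s hx ih =>
    rw [Finset.sum_cons, Submodule.add_eq_sup, sup_le_iff, ih]
    simp

lemma le_sum {ι : Type*} (s : Finset ι) (t : ι → Submodule k F) {j : ι} (hj : j ∈ s) :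
    t j ≤ ∑ i ∈ s, t i :=
  (sum_le_iff s t _).1 le_rfl j hj

lemma mul_ne_bot {P Q : Submodule k F} (hP : P ≠ ⊥) (hQ : Q ≠ ⊥) : P * Q ≠ ⊥ := by
  obtain ⟨p, hp, hp0⟩ := P.ne_bot_iff.1 hP
  obtain ⟨q, hq, hq0⟩ := Q.ne_bot_iff.1 hQ
  exact (P * Q).ne_bot_iff.2 ⟨p * q, Submodule.mul_mem_mul hp hq, mul_ne_zero hp0 hq0⟩

/-- Converse direction: an element integral over `L` admits a nonzero
finitely generated subspace `V` with `f • V ⊆ L * V`. -/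
lemma exists_mulSub_of_integral (L : Submodule k F) (hL : L ≠ ⊥) (hLfg : L.FG) {f : F}
    (h : IsIntegralOverSubspace L f) :
    ∃ V : Submodule k F, V ≠ ⊥ ∧ V.FG ∧ ∀ v ∈ V, f * v ∈ L * V := by
  obtain ⟨n, hn, g, hg, heq⟩ := h
  set V : Submodule k F :=
    ∑ i ∈ Finset.range n, L ^ (n - 1 - i) * Submodule.span k {f ^ i} with hV
  have hterm : ∀ i < n, L ^ (n - 1 - i) * Submodule.span k {f ^ i} ≤ V := by
    intro i hi
    rw [hV]
    exact le_sum (Finset.range n) (fun j => L ^ (n - 1 - j) * Submodule.span k {f ^ j})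
      (Finset.mem_range.2 hi)
  have hVterm : ∀ j < n, L ^ (n - j) * Submodule.span k {f ^ j} ≤ L * V := by
    intro j hj
    have e : L ^ (n - j) = L * L ^ (n - 1 - j) := by
      have : n - j = (n - 1 - j) + 1 := by omega
      rw [this, pow_succ, mul_comm]
    rw [e, mul_assoc]
    exact mul_le_mul' le_rfl (hterm j hj)
  refine ⟨V, ?_, ?_, ?_⟩
  · obtain ⟨l, hl, hl0⟩ := L.ne_bot_iff.1 hL
    have hmem : l ^ (n - 1) * f ^ 0 ∈ L ^ (n - 1 - 0) * Submodule.span k {f ^ 0} :=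
      Submodule.mul_mem_mul (by rw [Nat.sub_zero]; exact Submodule.pow_mem_pow L hl _)
        (Submodule.mem_span_singleton_self _)
    refine V.ne_bot_iff.2 ⟨l ^ (n - 1) * f ^ 0, hterm 0 hn hmem, ?_⟩
    simpa using pow_ne_zero (n - 1) hl0
  · rw [hV]
    refine Finset.sum_induction _ _ (fun a b ha hb => ?_) ?_ ?_
    · rw [Submodule.add_eq_sup]; exact ha.sup hb
    · exact Submodule.fg_bot
    · intro i _
      exact (hLfg.pow _).mul (Submodule.fg_span_singleton _)
  · have hle : V ≤ Submodule.comap (LinearMap.mulLeft k f) (L * V) := by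
      rw [hV, sum_le_iff]
      intro i hi
      rw [Finset.mem_range] at hi
      apply Submodule.mul_le.2
      intro x hx y hy
      rw [Submodule.mem_comap, LinearMap.mulLeft_apply]
      obtain ⟨c, rfl⟩ := Submodule.mem_span_singleton.1 hy
      have e : f * (x * (c • f ^ i)) = c • (x * f ^ (i + 1)) := by
        rw [mul_smul_comm, mul_smul_comm]
        ring_nf
      rw [e]
      apply Submodule.smul_mem
      rcases lt_or_eq_of_le (Nat.succ_le_of_lt hi) with hi1 | hi1
      · exact hVterm (i + 1) hi1 (Submodule.mul_mem_mul (by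
          have : n - (i + 1) = n - 1 - i := by omega
          rwa [this]) (Submodule.mem_span_singleton_self _))
      · -- i + 1 = n
        have hx0 : n - 1 - i = 0 := by omega
        rw [hx0, pow_zero, Submodule.mem_one] at hx
        obtain ⟨c', rfl⟩ := hx
        have hfn : f ^ (i + 1) = -(∑ j ∈ Finset.range n, g j * f ^ j) := by
          rw [show i + 1 = n by omega]
          exact eq_neg_of_add_eq_zero_left heq
        rw [hfn, mul_neg]
        apply Submodule.neg_mem
        have e3 : (algebraMap k F c') * ∑ j ∈ Finset.range n, g j * f ^ j
            = ∑ j ∈ Finset.range n, (algebraMap k F c') * (g j * f ^ j) :=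
          Finset.mul_sum _ _ _
        rw [e3]
        apply Submodule.sum_mem
        intro j hj
        rw [Finset.mem_range] at hj
        have e2 : algebraMap k F c' * (g j * f ^ j) = c' • (g j * f ^ j) :=
          (Algebra.smul_def c' _).symm
        rw [e2]
        exact Submodule.smul_mem _ _
          (hVterm j hj (Submodule.mul_mem_mul (hg j hj) (Submodule.mem_span_singleton_self _)))
    exact fun v hv => hle hv

lemma transfer (L M N : Submodule k F) (hL : L ≠ ⊥) (hN : N ≠ ⊥)
    (hLfin : FiniteDimensional k L) (hNfin : FiniteDimensional k N)
    (h : L * N = M * N) (f : F) (hf : IsIntegralOverSubspace L f) :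
    IsIntegralOverSubspace M f := by
  obtain ⟨V, hVb, hVfg, hVmul⟩ :=
    exists_mulSub_of_integral L hL ((Submodule.fg_iff_finiteDimensional L).2 hLfin) hf
  have hNfg : N.FG := (Submodule.fg_iff_finiteDimensional N).2 hNfin
  apply integral_of_smul_le M (V * N) (mul_ne_bot hVb hN)
    ((Submodule.fg_iff_finiteDimensional _).1 (hVfg.mul hNfg))
  have hle : V * N ≤ Submodule.comap (LinearMap.mulLeft k f) (M * (V * N)) := by
    apply Submodule.mul_le.2
    intro v hv x hx
    rw [Submodule.mem_comap, LinearMap.mulLeft_apply]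
    have h1 : f * (v * x) = (f * v) * x := by ring
    rw [h1]
    have h2 : (f * v) * x ∈ (L * V) * N := Submodule.mul_mem_mul (hVmul v hv) hx
    have h3 : (L * V) * N = M * (V * N) := by
      rw [mul_comm L V, mul_assoc, h, ← mul_assoc, mul_comm V M, mul_assoc]
    rwa [h3] at h2
  exact fun w hw => hle hw

end Stmt4Aux

/-- If `L*N = M*N` for nonzero finite-dimensional subspaces, then every element of
`L` is integral over `M`, and `L` and `M` have the same integral closure. -/
theorem stmt4 (k F : Type*) [Field k] [Field F] [Algebra k F]
    (L M N : Submodule k F) (hL : L ≠ ⊥) (hM : M ≠ ⊥) (hN : N ≠ ⊥)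
    (hLfin : FiniteDimensional k L) (hMfin : FiniteDimensional k M)
    (hNfin : FiniteDimensional k N)
    (h : L * N = M * N) :
    (∀ f ∈ L, IsIntegralOverSubspace M f) ∧
    (∀ f : F, IsIntegralOverSubspace L f ↔ IsIntegralOverSubspace M f) := by
  constructor
  · intro f hf
    exact Stmt4Aux.integral_of_smul_le M N hN hNfin f
      (fun v hv => h ▸ Submodule.mul_mem_mul hf hv)
  · intro f
    exact ⟨Stmt4Aux.transfer L M N hL hN hLfin hNfin h f,
      Stmt4Aux.transfer M L N hM hN hMfin hNfin h.symm f⟩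
end

section
/- Let X be an irreducible n-dimensional variety over an algebraically closed field k and L_1, ..., L_n nonzero finite-dimensional subspaces of k(X). If for each i, M_i is a subspace equivalent to L_i (i.e., L_i N_i = M_i N_i for some nonzero finite-dimensional N_i), then the intersection indices agree: [L_1, ..., L_n] = [M_1, ..., M_n]. -/
section aux

variable {k F : Type*} [Field k] [Field F] [Algebra k F]

lemma stmt8_mul_ne_bot {A B : Submodule k F} (hA : A ≠ ⊥) (hB : B ≠ ⊥) :
    A * B ≠ ⊥ := by
  obtain ⟨a, haA, ha⟩ := Submodule.exists_mem_ne_zero_of_ne_bot hA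
  obtain ⟨b, hbB, hb⟩ := Submodule.exists_mem_ne_zero_of_ne_bot hB
  intro h
  have : a * b ∈ A * B := Submodule.mul_mem_mul haA hbB
  rw [h, Submodule.mem_bot] at this
  exact mul_ne_zero ha hb this

lemma stmt8_mul_fd {A B : Submodule k F} (hA : FiniteDimensional k ↥A)
    (hB : FiniteDimensional k ↥B) : FiniteDimensional k ↥(A * B) := by
  exact Module.Finite.iff_fg.mpr
    (Submodule.FG.mul (Module.Finite.iff_fg.mp hA) (Module.Finite.iff_fg.mp hB))

end aux

/-- Invariance of the intersection index under equivalence of subspaces: if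
`I` is the intersection index of `n`-tuples of nonzero finite-dimensional subspaces
of `k(X)` (here abstracted as an `F`, with `I` assumed multi-additive, as follows
from the theory), and `L_i N_i = M_i N_i` for all `i`, then
`[L_1,…,L_n] = [M_1,…,M_n]`. -/
theorem stmt8 (k F : Type*) [Field k] [IsAlgClosed k] [Field F] [Algebra k F]
    (n : ℕ)
    (I : (Fin n → Submodule k F) → ℤ)
    -- multi-additivity of the intersection index in each argument
    (hadd : ∀ (L : Fin n → Submodule k F) (i : Fin n) (A B : Submodule k F),
      (∀ j, L j ≠ ⊥ ∧ FiniteDimensional k ↥(L j)) →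
      A ≠ ⊥ → B ≠ ⊥ → FiniteDimensional k ↥A → FiniteDimensional k ↥B →
      L i = A * B →
      I L = I (Function.update L i A) + I (Function.update L i B))
    (L M N : Fin n → Submodule k F)
    (hL : ∀ i, L i ≠ ⊥ ∧ FiniteDimensional k ↥(L i))
    (hM : ∀ i, M i ≠ ⊥ ∧ FiniteDimensional k ↥(M i))
    (hN : ∀ i, N i ≠ ⊥ ∧ FiniteDimensional k ↥(N i))
    (hequiv : ∀ i, L i * N i = M i * N i) :
    I L = I M := by
  -- key step: replacing one coordinate
  have key : ∀ (P : Fin n → Submodule k F) (i : Fin n),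
      (∀ j, P j ≠ ⊥ ∧ FiniteDimensional k ↥(P j)) →
      I (Function.update P i (L i)) = I (Function.update P i (M i)) := by
    intro P i hP
    have hQgood : ∀ j, Function.update P i (L i * N i) j ≠ ⊥ ∧
        FiniteDimensional k ↥(Function.update P i (L i * N i) j) := by
      intro j
      by_cases hj : j = i
      · subst hj
        rw [Function.update_self]
        exact ⟨stmt8_mul_ne_bot (hL j).1 (hN j).1, stmt8_mul_fd (hL j).2 (hN j).2⟩
      · rw [Function.update_of_ne hj]
        exact hP j
    set Q : Fin n → Submodule k F := Function.update P i (L i * N i) with hQ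
    have hupd : ∀ A : Submodule k F, Function.update Q i A = Function.update P i A := by
      intro A
      simp [hQ, Function.update_idem]
    have h1 : I Q = I (Function.update Q i (L i)) + I (Function.update Q i (N i)) := by
      apply hadd Q i (L i) (N i) hQgood (hL i).1 (hN i).1 (hL i).2 (hN i).2
      simp [hQ]
    have h2 : I Q = I (Function.update Q i (M i)) + I (Function.update Q i (N i)) := by
      apply hadd Q i (M i) (N i) hQgood (hM i).1 (hN i).1 (hM i).2 (hN i).2
      simp [hQ, hequiv i]
    rw [hupd] at h1 h2
    omega
  -- hybrid family
  let H : ℕ → (Fin n → Submodule k F) := fun m j => if (j : ℕ) < m then M j else L j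
  have hHgood : ∀ m, ∀ j, H m j ≠ ⊥ ∧ FiniteDimensional k ↥(H m j) := by
    intro m j
    by_cases hj : (j : ℕ) < m
    · have e : H m j = M j := if_pos hj
      rw [e]; exact hM j
    · have e : H m j = L j := if_neg hj
      rw [e]; exact hL j
  have hstep : ∀ m : ℕ, m < n → I (H m) = I (H (m + 1)) := by
    intro m hm
    have hi : ∀ A : Submodule k F,
        Function.update (H m) ⟨m, hm⟩ A = fun j : Fin n => if (j : ℕ) = m then A else H m j := by
      intro A
      funext j
      by_cases hj : (j : ℕ) = m
      · have : j = ⟨m, hm⟩ := Fin.ext hj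
        rw [this, Function.update_self]
        simp [hj]
      · rw [Function.update_of_ne (by simpa [Fin.ext_iff] using hj)]
        simp [hj]
    have hHm : H m = Function.update (H m) ⟨m, hm⟩ (L ⟨m, hm⟩) := by
      rw [hi]
      funext j
      by_cases hj : (j : ℕ) = m
      · rw [show j = (⟨m, hm⟩ : Fin n) from Fin.ext hj]
        simp [H]
      · simp [hj]
    have hHm1 : H (m + 1) = Function.update (H m) ⟨m, hm⟩ (M ⟨m, hm⟩) := by
      rw [hi]
      funext j
      simp only [H]
      by_cases hj : (j : ℕ) = m
      · rw [show j = (⟨m, hm⟩ : Fin n) from Fin.ext hj]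
        simp
      · have h2 : (j : ℕ) < m + 1 ↔ (j : ℕ) < m := by omega
        simp [hj, h2]
    have hkey := key (H m) ⟨m, hm⟩ (hHgood m)
    rw [← hHm, ← hHm1] at hkey
    exact hkey
  have hall : ∀ m : ℕ, m ≤ n → I (H 0) = I (H m) := by
    intro m
    induction m with
    | zero => intro _; rfl
    | succ m ih => intro h; rw [ih (by omega), hstep m (by omega)]
  have h0 : H 0 = L := by funext j; simp [H]
  have hn : H n = M := by funext j; simp [H, j.isLt]
  rw [← h0, ← hn]
  exact hall n le_rfl
end
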